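/- Let R be a finite commutative Frobenius ring with representatives a_0, …, a_t of its principal ideals, and define I = (I_0, …, I_t) by I_i = {j ∈ {0,…,t} : a_j a_k ≠ 0 for all k such that a_i a_k ≠ 0}. Then for all i, j ∈ {0,…,t}, j ∈ I_i if and only if a_iR ⊆ a_jR; that is, the matrix P^I (with (i,j) entry 1 if j ∈ I_i and 0 otherwise) is the adjacency matrix of the poset of principal ideals of R under set inclusion. Consequently P^I is invertible as a matrix over ℚ. -/

import Mathlib

noncomputable section
open scoped BigOperators

/-- The dual of a linear code `C ⊆ Rⁿ` with respect to the standard inner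
product `u·v = ∑ ℓ, u ℓ * v ℓ`. -/
def dualCode {R : Type*} [CommRing R] {n : ℕ} (C : Submodule R (Fin n → R)) :
    Submodule R (Fin n → R) where
  carrier := {v | ∀ u ∈ C, ∑ ℓ, u ℓ * v ℓ = 0}
  add_mem' := by
    intro v w hv hw u hu
    simp only [Set.mem_setOf_eq] at *
    have h1 := hv u hu
    have h2 := hw u hu
    simp only [Pi.add_apply, mul_add, Finset.sum_add_distrib, h1, h2, add_zero]
  zero_mem' := by
    intro u hu
    simp
  smul_mem' := by
    intro c v hv u hu
    simp only [Set.mem_setOf_eq] at *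
    have h := hv u hu
    have : ∑ ℓ, u ℓ * (c • v) ℓ = c * ∑ ℓ, u ℓ * v ℓ := by
      rw [Finset.mul_sum]
      exact Finset.sum_congr rfl fun ℓ _ => by
        simp only [Pi.smul_apply, smul_eq_mul]; ring
    rw [this, h, mul_zero]

/-- A finite commutative ring is Frobenius iff `|C|·|C⊥| = |R|ⁿ` for every
linear code `C` of every length `n` over `R`. -/
def IsFrobeniusRing (R : Type*) [CommRing R] [Fintype R] : Prop :=
  ∀ (n : ℕ) (C : Submodule R (Fin n → R)),
    Nat.card C * Nat.card (dualCode C) = Fintype.card R ^ n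

/-! Over a Frobenius ring, viewing an ideal `J` as the length-one code `{v | v 0 ∈ J}`, whose
dual is the annihilator of `J`, gives `|J| · |ann J| = |R|`; so `J ⊆ ann (ann J)` have the same
size and `ann (ann J) = J`. Hence `a_i R ⊆ a_j R` iff `ann (a_j) ⊆ ann (a_i)`, which is the
defining condition of `I_i` read contrapositively, since every `z ∈ R` generates the same ideal
as some `a_k`. The inclusion matrix of the distinct ideals `a_i R` is triangular with unit diagonal
for any linear extension of inclusion, so its determinant is `1`. -/

namespace Matrix

variable {ι α K : Type*} [Fintype ι] [DecidableEq ι] [CommRing K]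

theorem BlockTriangular.det_eq_one_of_injective [LinearOrder α] {M : Matrix ι ι K} {b : ι → α}
    (hM : M.BlockTriangular b) (hb : Function.Injective b) (hdiag : ∀ i, M i i = 1) :
    M.det = 1 := by
  rw [hM.det]
  refine Finset.prod_eq_one fun k _ => ?_
  have hblock : M.toSquareBlock b k = 1 := by
    ext ⟨i, hi⟩ ⟨j, hj⟩
    obtain rfl : i = j := hb (hi.trans hj.symm)
    simpa [toSquareBlock, toSquareBlockProp] using hdiag i
  rw [hblock, det_one]

theorem det_eq_one_of_ne_zero_imp_le [PartialOrder α] {M : Matrix ι ι K} {f : ι → α}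
    (hf : Function.Injective f) (hM : ∀ i j, M i j ≠ 0 → f i ≤ f j) (hdiag : ∀ i, M i i = 1) :
    M.det = 1 := by
  refine BlockTriangular.det_eq_one_of_injective (b := toLinearExtension ∘ f)
    (fun i j hji => ?_) hf hdiag
  by_contra hne
  exact (toLinearExtension.monotone (hM i j hne)).not_gt hji

end Matrix

namespace Ideal

variable {R : Type*} [CommRing R]

theorem le_annihilator_annihilator (J : Ideal R) : J ≤ J.annihilator.annihilator :=
  fun x hx => Submodule.mem_annihilator.mpr fun y hy => by
    rw [smul_eq_mul, mul_comm, ← smul_eq_mul]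
    exact Submodule.mem_annihilator.mp hy x hx

theorem mem_annihilator_span_singleton_iff {r w : R} :
    w ∈ (Ideal.span {r}).annihilator ↔ r * w = 0 := by
  rw [Ideal.span, Submodule.mem_annihilator_span_singleton, smul_eq_mul, mul_comm]

theorem mul_eq_zero_iff_of_span_singleton_eq {r s : R} (h : Ideal.span {r} = Ideal.span {s})
    (w : R) : w * r = 0 ↔ w * s = 0 := by
  rw [mul_comm, mul_comm w, ← mem_annihilator_span_singleton_iff,
    ← mem_annihilator_span_singleton_iff, h]

def lengthOneCode (J : Ideal R) : Submodule R (Fin 1 → R) :=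
  Submodule.comap (LinearMap.proj 0) J

theorem card_lengthOneCode (J : Ideal R) : Nat.card J.lengthOneCode = Nat.card J :=
  Nat.card_congr <| (Equiv.funUnique (Fin 1) R).subtypeEquiv fun _ => Iff.rfl

theorem dualCode_lengthOneCode (J : Ideal R) :
    dualCode J.lengthOneCode = J.annihilator.lengthOneCode := by
  ext v
  simp only [dualCode, lengthOneCode, Submodule.mem_mk, Submodule.mem_comap, LinearMap.proj_apply,
    Submodule.mem_annihilator, smul_eq_mul, Fin.sum_univ_one]
  refine ⟨fun h s hs => mul_comm s (v 0) ▸ h (fun _ => s) hs, fun h u hu => ?_⟩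
  rw [mul_comm]
  exact h _ hu

end Ideal

namespace IsFrobeniusRing

variable {R : Type*} [CommRing R] [Fintype R]

theorem card_mul_card_annihilator (hR : IsFrobeniusRing R) (J : Ideal R) :
    Nat.card J * Nat.card J.annihilator = Fintype.card R := by
  simpa only [pow_one, J.dualCode_lengthOneCode, J.card_lengthOneCode,
    J.annihilator.card_lengthOneCode] using hR 1 J.lengthOneCode

theorem annihilator_annihilator (hR : IsFrobeniusRing R) (J : Ideal R) :
    J.annihilator.annihilator = J := by
  have hcard : Nat.card J.annihilator.annihilator = Nat.card J := by
    have h := hR.card_mul_card_annihilator J.annihilator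
    rw [← hR.card_mul_card_annihilator J, mul_comm (Nat.card J)] at h
    exact Nat.eq_of_mul_eq_mul_left Nat.card_pos h
  refine (SetLike.ext' (Set.eq_of_subset_of_ncard_le J.le_annihilator_annihilator ?_
    (Set.toFinite _))).symm
  rw [← Nat.card_coe_set_eq, ← Nat.card_coe_set_eq, SetLike.coe_sort_coe, SetLike.coe_sort_coe,
    hcard]

theorem annihilator_le_annihilator_iff (hR : IsFrobeniusRing R) {J K : Ideal R} :
    K.annihilator ≤ J.annihilator ↔ J ≤ K := by
  refine ⟨fun h => ?_, Submodule.annihilator_mono⟩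
  simpa only [hR.annihilator_annihilator] using Submodule.annihilator_mono h

theorem span_singleton_le_span_singleton_iff (hR : IsFrobeniusRing R) {x y : R} :
    Ideal.span {x} ≤ Ideal.span {y} ↔ ∀ z, y * z = 0 → x * z = 0 := by
  rw [← hR.annihilator_le_annihilator_iff, SetLike.le_def]
  simp only [Ideal.mem_annihilator_span_singleton_iff]

end IsFrobeniusRing

theorem forall_mul_eq_zero_imp_iff_of_span_rep {R ι : Type*} [CommRing R] {a : ι → R}
    (hrep : ∀ r : R, ∃ i, Ideal.span {r} = Ideal.span {a i}) {x y : R} :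
    (∀ k, y * a k = 0 → x * a k = 0) ↔ ∀ z, y * z = 0 → x * z = 0 := by
  refine ⟨fun h z => ?_, fun h k => h (a k)⟩
  obtain ⟨k, hk⟩ := hrep z
  rw [Ideal.mul_eq_zero_iff_of_span_singleton_eq hk, Ideal.mul_eq_zero_iff_of_span_singleton_eq hk]
  exact h k

open Classical

theorem stmt7 {R : Type*} [CommRing R] [Fintype R] (hR : IsFrobeniusRing R)
    {t : ℕ} (a : Fin (t + 1) → R)
    (hrep : ∀ r : R, ∃ i, Ideal.span {r} = Ideal.span {a i})
    (hinj : ∀ i j, Ideal.span {a i} = Ideal.span {a j} → i = j)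
    (I : Fin (t + 1) → Set (Fin (t + 1)))
    (hI : ∀ i, I i = {j | ∀ k, a i * a k ≠ 0 → a j * a k ≠ 0})
    (P : Matrix (Fin (t + 1)) (Fin (t + 1)) ℚ)
    (hP : ∀ i j, P i j = if j ∈ I i then 1 else 0) :
    (∀ i j, j ∈ I i ↔ Ideal.span {a i} ≤ Ideal.span {a j}) ∧ IsUnit P := by
  have hmem : ∀ i j, j ∈ I i ↔ Ideal.span {a i} ≤ Ideal.span {a j} := fun i j => by
    simp only [hI, Set.mem_ofPred_eq, hR.span_singleton_le_span_singleton_iff,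
      ← forall_mul_eq_zero_imp_iff_of_span_rep hrep, not_imp_not]
  have hdet : P.det = 1 := by
    refine Matrix.det_eq_one_of_ne_zero_imp_le (f := fun i => Ideal.span {a i})
      (fun i j => hinj i j) (fun i j hij => (hmem i j).mp ?_) (fun i => ?_)
    · by_contra hji
      exact hij (by rw [hP, if_neg hji])
    · rw [hP, if_pos ((hmem i i).mpr le_rfl)]
  exact ⟨hmem, P.isUnit_iff_isUnit_det.mpr (hdet ▸ isUnit_one)⟩

end
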